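/- arXiv:0711.3898 — 6 statements merged into one kernel-verified Lean document; each statement's English description precedes it below -/
import Mathlib

section
/- Volterra expansion formula: for any R, S ∈ B and any k ≥ 1, set I_k := ∫_{Δ_k} exp(s₁R)·S·exp(s₂R)·S ⋯ S·exp(s_{k+1}R) ds₁⋯ds_k (a Bochner integral over the simplex, containing exactly k factors of S). Then ‖I_k‖ ≤ exp(‖R‖)·‖S‖^k/k! for every k, the series ∑_{k≥1} I_k converges absolutely in B, and exp(R+S) = exp(R) + ∑_{k=1}^∞ I_k. -/
/-!
Duhamel's formula
`exp (t • (R + S)) - exp (t • R) = ∫ u in 0..t, exp (u • R) * S * exp ((t - u) • (R + S))`,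
applied to the last factor of the remainder `∫_{Δ_n} exp(s₁R) S ⋯ exp(s_nR) S exp(s_{n+1}(R + S))`,
splits it into the `n`-th Volterra term plus the next remainder; hence `exp (R + S)` is the sum of
the first `n` terms plus the `n`-th remainder. On `Δ_n`, which has volume `1 / n!`, all these
integrands are bounded by `exp r * ‖S‖ ^ n` for any `r ≥ ‖R‖, ‖R + S‖`, so the terms are absolutely
summable and the remainders tend to `0`.
-/

open MeasureTheory NormedSpace Set Nat

namespace Volterra

def simplex (n : ℕ) : Set (Fin n → ℝ) := {s | (∀ i, 0 ≤ s i) ∧ ∑ i, s i ≤ 1}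

lemma measurableSet_simplex (n : ℕ) : MeasurableSet (simplex n) := by
  rw [simplex, ofPred_and, ofPred_forall]
  exact (MeasurableSet.iInter fun i =>
      measurableSet_le measurable_const (measurable_pi_apply i)).inter
    (measurableSet_le (Finset.measurable_sum _ fun i _ => measurable_pi_apply i) measurable_const)

lemma isCompact_simplex (n : ℕ) : IsCompact (simplex n) := by
  have hclosed : IsClosed (simplex n) := by
    rw [simplex, ofPred_and, ofPred_forall]
    exact (isClosed_iInter fun i => isClosed_le continuous_const (continuous_apply i)).inter
      (isClosed_le (continuous_finsetSum _ fun i _ => continuous_apply i) continuous_const)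
  refine (isCompact_univ_pi fun _ => isCompact_Icc (a := (0 : ℝ)) (b := 1)).of_isClosed_subset
    hclosed fun s ⟨h0, h1⟩ i _ => ⟨h0 i, ?_⟩
  exact (Finset.single_le_sum (fun j _ => h0 j) (Finset.mem_univ i)).trans h1

lemma simplex_zero : simplex 0 = univ := by
  ext s
  simp [simplex]

lemma snoc_mem_simplex {n : ℕ} {s : Fin n → ℝ} {u : ℝ} :
    Fin.snoc s u ∈ simplex (n + 1) ↔ s ∈ simplex n ∧ u ∈ Icc 0 (1 - ∑ i, s i) := by
  simp only [simplex, mem_ofPred_eq, Fin.sum_snoc, Set.mem_Icc, Fin.forall_fin_succ',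
    Fin.snoc_castSucc, Fin.snoc_last]
  constructor
  · rintro ⟨⟨h0, hu⟩, h1⟩
    exact ⟨⟨h0, by linarith⟩, hu, by linarith⟩
  · rintro ⟨⟨h0, -⟩, hu, h1⟩
    exact ⟨⟨h0, hu⟩, by linarith⟩

theorem integral_pi_succ_eq_integral_snoc {α E : Type*} [MeasurableSpace α]
    [NormedAddCommGroup E] [NormedSpace ℝ E] {μ : Measure α} [SigmaFinite μ] {n : ℕ}
    {f : (Fin (n + 1) → α) → E} (hf : Integrable f (Measure.pi fun _ => μ)) :
    ∫ x, f x ∂Measure.pi (fun _ => μ) =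
      ∫ s, ∫ u, f (Fin.snoc s u) ∂μ ∂Measure.pi (fun _ => μ) := by
  have he := measurePreserving_piFinSuccAbove (fun _ : Fin (n + 1) => μ) (Fin.last n)
  have hsymm : ∀ p : α × (Fin n → α),
      (MeasurableEquiv.piFinSuccAbove (fun _ => α) (Fin.last n)).symm p = Fin.snoc p.2 p.1 := by
    intro p
    simp [MeasurableEquiv.piFinSuccAbove_symm_apply, Fin.snocEquiv]
  rw [← he.symm.integral_comp', integral_prod_symm]
  · simp_rw [hsymm]
  · exact (he.symm.integrable_comp_emb (MeasurableEquiv.measurableEmbedding _)).2 hf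

variable {E : Type*} [NormedAddCommGroup E] [NormedSpace ℝ E]

lemma integral_simplex_succ {n : ℕ} {f : (Fin (n + 1) → ℝ) → E}
    (hf : IntegrableOn f (simplex (n + 1))) :
    ∫ x in simplex (n + 1), f x =
      ∫ s in simplex n, ∫ u in Icc 0 (1 - ∑ i, s i), f (Fin.snoc s u) := by
  have hfiber : ∀ s u, (simplex (n + 1)).indicator f (Fin.snoc s u) = (simplex n).indicator
      (fun s => (Icc 0 (1 - ∑ i, s i)).indicator (fun u => f (Fin.snoc s u)) u) s := by
    intro s u
    by_cases hs : s ∈ simplex n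
    · rw [indicator_of_mem hs]
      by_cases hu : u ∈ Icc 0 (1 - ∑ i, s i)
      · rw [indicator_of_mem hu, indicator_of_mem (snoc_mem_simplex.2 ⟨hs, hu⟩)]
      · rw [indicator_of_notMem hu, indicator_of_notMem (fun h => hu (snoc_mem_simplex.1 h).2)]
    · rw [indicator_of_notMem hs, indicator_of_notMem (fun h => hs (snoc_mem_simplex.1 h).1)]
  rw [← integral_indicator (measurableSet_simplex _),
    ← integral_indicator (measurableSet_simplex _), volume_pi, integral_pi_succ_eq_integral_snoc,
    ← volume_pi]
  · refine integral_congr_ae (Filter.Eventually.of_forall fun s => ?_)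
    simp only [hfiber]
    by_cases hs : s ∈ simplex n
    · simp only [indicator_of_mem hs]
      exact integral_indicator measurableSet_Icc
    · simp only [indicator_of_notMem hs, integral_zero]
  · rw [← volume_pi]
    exact (integrable_indicator_iff (measurableSet_simplex _)).2 hf

lemma integral_simplex_zero [CompleteSpace E] (f : (Fin 0 → ℝ) → E) :
    ∫ s in simplex 0, f s = f 0 := by
  rw [simplex_zero, Measure.restrict_univ, volume_pi, Measure.pi_of_empty (x := 0), integral_dirac]

lemma integral_simplex_one_sub_sum_pow (n m : ℕ) :
    ∫ s in simplex n, (1 - ∑ i, s i) ^ m = (m ! : ℝ) / (n + m)! := by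
  induction n generalizing m with
  | zero =>
    rw [integral_simplex_zero]
    simp [div_self (Nat.cast_ne_zero.2 m.factorial_ne_zero : (m ! : ℝ) ≠ 0)]
  | succ n ih =>
    have hcont : Continuous fun s : Fin (n + 1) → ℝ => (1 - ∑ i, s i) ^ m := by fun_prop
    have hinner : ∀ s ∈ simplex n, ∫ u in Icc 0 (1 - ∑ i, s i),
        (1 - ∑ i, (Fin.snoc s u : Fin (n + 1) → ℝ) i) ^ m =
          (1 - ∑ i, s i) ^ (m + 1) / (m + 1) := by
      intro s hs
      have ht : 0 ≤ 1 - ∑ i, s i := sub_nonneg.2 hs.2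
      simp_rw [Fin.sum_snoc, ← sub_sub]
      rw [integral_Icc_eq_integral_Ioc, ← intervalIntegral.integral_of_le ht,
        intervalIntegral.integral_comp_sub_left (fun u => u ^ m)]
      simp [integral_pow]
    rw [integral_simplex_succ (hcont.continuousOn.integrableOn_compact (isCompact_simplex _)),
      setIntegral_congr_fun (measurableSet_simplex n) hinner, integral_div, ih,
      Nat.factorial_succ, show n + (m + 1) = n + 1 + m by ring]
    push_cast
    field_simp

lemma measureReal_simplex (n : ℕ) : volume.real (simplex n) = (n ! : ℝ)⁻¹ := by
  simpa using integral_simplex_one_sub_sum_pow n 0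

lemma norm_setIntegral_simplex_le {n : ℕ} {f : (Fin n → ℝ) → E} {M : ℝ}
    (hM : ∀ s ∈ simplex n, ‖f s‖ ≤ M) : ‖∫ s in simplex n, f s‖ ≤ M / n ! := by
  simpa [measureReal_simplex, div_eq_mul_inv] using
    norm_setIntegral_le_of_norm_le_const (μ := volume) (isCompact_simplex n).measure_lt_top hM

section BanachAlgebra

variable {B : Type*} [NormedRing B] [NormedAlgebra ℝ B]

noncomputable def prodExpSmulMul (R S : B) {n : ℕ} (s : Fin n → ℝ) : B :=
  (List.ofFn fun i => exp (s i • R) * S).prod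

noncomputable def integrand (R S C : B) (n : ℕ) (s : Fin n → ℝ) : B :=
  prodExpSmulMul R S s * exp ((1 - ∑ i, s i) • C)

noncomputable def term (R S : B) (n : ℕ) : B :=
  ∫ s in simplex n, integrand R S R n s

noncomputable def remainder (R S : B) (n : ℕ) : B :=
  ∫ s in simplex n, integrand R S (R + S) n s

lemma prodExpSmulMul_snoc (R S : B) {n : ℕ} (s : Fin n → ℝ) (u : ℝ) :
    prodExpSmulMul R S (Fin.snoc s u : Fin (n + 1) → ℝ) =
      prodExpSmulMul R S s * (exp (u • R) * S) := by
  rw [prodExpSmulMul, List.ofFn_succ', List.prod_concat]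
  simp [prodExpSmulMul]

section NormOneClass

variable [NormOneClass B]

lemma norm_exp_le (a : B) : ‖exp a‖ ≤ Real.exp ‖a‖ := by
  rw [Real.exp_eq_exp_ℝ, exp_eq_tsum ℝ, exp_eq_tsum ℝ]
  have hsum : Summable fun n : ℕ => (n ! : ℝ)⁻¹ • ‖a‖ ^ n := by
    simpa only [smul_eq_mul, div_eq_inv_mul] using Real.summable_pow_div_factorial ‖a‖
  refine (norm_tsum_le_tsum_norm (norm_expSeries_summable' a)).trans
    ((norm_expSeries_summable' a).tsum_le_tsum (fun n => ?_) hsum)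
  rw [norm_smul, norm_inv, Real.norm_natCast, smul_eq_mul]
  exact mul_le_mul_of_nonneg_left (norm_pow_le a n) (by positivity)

lemma norm_exp_smul_le {a : B} {t r : ℝ} (ht : 0 ≤ t) (ha : ‖a‖ ≤ r) :
    ‖exp (t • a)‖ ≤ Real.exp (t * r) := by
  refine (norm_exp_le _).trans (Real.exp_le_exp.2 ?_)
  rw [norm_smul, Real.norm_of_nonneg ht]
  exact mul_le_mul_of_nonneg_left ha ht

lemma norm_prodExpSmulMul_le {R S : B} {n : ℕ} {s : Fin n → ℝ} {r : ℝ} (hs : ∀ i, 0 ≤ s i)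
    (hR : ‖R‖ ≤ r) : ‖prodExpSmulMul R S s‖ ≤ Real.exp ((∑ i, s i) * r) * ‖S‖ ^ n := by
  calc ‖prodExpSmulMul R S s‖ ≤ ∏ i, ‖exp (s i • R) * S‖ := by
        simpa [prodExpSmulMul, List.map_ofFn, List.prod_ofFn] using
          List.norm_prod_le (List.ofFn fun i => exp (s i • R) * S)
    _ ≤ ∏ i, Real.exp (s i * r) * ‖S‖ := Finset.prod_le_prod (fun i _ => norm_nonneg _)
        fun i _ => (norm_mul_le _ _).trans <|
          mul_le_mul_of_nonneg_right (norm_exp_smul_le (hs i) hR) (norm_nonneg S)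
    _ = Real.exp ((∑ i, s i) * r) * ‖S‖ ^ n := by
        rw [Finset.prod_mul_distrib, Finset.prod_const, ← Real.exp_sum, Finset.card_univ,
          Fintype.card_fin, Finset.sum_mul]

lemma norm_integrand_le {R S C : B} {n : ℕ} {s : Fin n → ℝ} {r : ℝ} (hs : s ∈ simplex n)
    (hR : ‖R‖ ≤ r) (hC : ‖C‖ ≤ r) : ‖integrand R S C n s‖ ≤ Real.exp r * ‖S‖ ^ n :=
  calc ‖integrand R S C n s‖
      ≤ Real.exp ((∑ i, s i) * r) * ‖S‖ ^ n * Real.exp ((1 - ∑ i, s i) * r) :=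
        (norm_mul_le _ _).trans <| mul_le_mul (norm_prodExpSmulMul_le hs.1 hR)
          (norm_exp_smul_le (sub_nonneg.2 hs.2) hC) (norm_nonneg _) (by positivity)
    _ = Real.exp r * ‖S‖ ^ n := by
        rw [mul_right_comm, ← Real.exp_add]
        ring_nf

lemma norm_term_le (R S : B) (n : ℕ) : ‖term R S n‖ ≤ Real.exp ‖R‖ * ‖S‖ ^ n / n ! :=
  norm_setIntegral_simplex_le fun _ hs => norm_integrand_le hs le_rfl le_rfl

lemma norm_remainder_le (R S : B) (n : ℕ) :
    ‖remainder R S n‖ ≤ Real.exp (‖R‖ + ‖S‖) * ‖S‖ ^ n / n ! :=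
  norm_setIntegral_simplex_le fun _ hs =>
    norm_integrand_le hs (le_add_of_nonneg_right (norm_nonneg S)) (norm_add_le R S)

lemma summable_norm_term (R S : B) : Summable fun n => ‖term R S n‖ :=
  .of_nonneg_of_le (fun _ => norm_nonneg _)
    (fun n => (norm_term_le R S n).trans_eq (mul_div_assoc ..))
    ((Real.summable_pow_div_factorial ‖S‖).mul_left _)

lemma tendsto_remainder_atTop (R S : B) :
    Filter.Tendsto (remainder R S) Filter.atTop (nhds 0) := by
  refine squeeze_zero_norm (fun n => (norm_remainder_le R S n).trans_eq (mul_div_assoc ..)) ?_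
  simpa using
    (FloorSemiring.tendsto_pow_div_factorial_atTop ‖S‖).const_mul (Real.exp (‖R‖ + ‖S‖))

end NormOneClass

variable [CompleteSpace B]

lemma continuous_exp_smul (a : B) : Continuous fun t : ℝ => exp (t • a) :=
  (differentiable_exp_smul_const ℝ a).continuous

theorem integral_exp_smul_mul_sub_mul_exp_smul (A C : B) (t : ℝ) :
    ∫ u in 0..t, exp (u • A) * (C - A) * exp ((t - u) • C) = exp (t • C) - exp (t • A) := by
  have hC : ∀ u : ℝ, HasDerivAt (fun u : ℝ => exp ((t - u) • C)) (-(C * exp ((t - u) • C))) u :=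
    fun u => by
      simpa [Function.comp_def] using
        (hasDerivAt_exp_smul_const' C (t - u)).scomp u ((hasDerivAt_id u).const_sub t)
  have hderiv : ∀ u : ℝ, HasDerivAt (fun u : ℝ => -(exp (u • A) * exp ((t - u) • C)))
      (exp (u • A) * (C - A) * exp ((t - u) • C)) u := fun u => by
    refine ((hasDerivAt_exp_smul_const A u).mul (hC u)).neg.congr_deriv ?_
    noncomm_ring
  have hcont : Continuous fun u : ℝ => exp (u • A) * (C - A) * exp ((t - u) • C) :=
    ((continuous_exp_smul A).mul continuous_const).mul
      ((continuous_exp_smul C).comp (continuous_const.sub continuous_id))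
  rw [intervalIntegral.integral_eq_sub_of_hasDerivAt (fun u _ => hderiv u)
    (hcont.intervalIntegrable 0 t)]
  simp only [sub_self, zero_smul, exp_zero, mul_one, one_mul, sub_zero]
  abel

lemma continuous_prodExpSmulMul (R S : B) (n : ℕ) :
    Continuous fun s : Fin n → ℝ => prodExpSmulMul R S s := by
  simp only [prodExpSmulMul, List.ofFn_eq_map]
  exact continuous_list_prod _ fun i _ =>
    ((continuous_exp_smul R).comp (continuous_apply i)).mul continuous_const

lemma continuous_integrand (R S C : B) (n : ℕ) : Continuous (integrand R S C n) :=
  (continuous_prodExpSmulMul R S n).mul <| (continuous_exp_smul C).comp <|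
    continuous_const.sub <| continuous_finsetSum _ fun i _ => continuous_apply i

lemma integral_simplex_zero_integrand (R S C : B) :
    ∫ s in simplex 0, integrand R S C 0 s = exp C := by
  rw [integral_simplex_zero]
  simp [integrand, prodExpSmulMul]

lemma integrableOn_simplex_integrand (R S C : B) (n : ℕ) :
    IntegrableOn (integrand R S C n) (simplex n) :=
  (continuous_integrand R S C n).continuousOn.integrableOn_compact (isCompact_simplex n)

lemma integral_Icc_integrand_snoc (R S : B) {n : ℕ} {s : Fin n → ℝ} (hs : s ∈ simplex n) :
    ∫ u in Icc 0 (1 - ∑ i, s i), integrand R S (R + S) (n + 1) (Fin.snoc s u) =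
      integrand R S (R + S) n s - integrand R S R n s := by
  set t := 1 - ∑ i, s i
  have hsnoc : ∀ u, integrand R S (R + S) (n + 1) (Fin.snoc s u) =
      prodExpSmulMul R S s * (exp (u • R) * (R + S - R) * exp ((t - u) • (R + S))) := by
    intro u
    simp only [integrand, prodExpSmulMul_snoc, Fin.sum_snoc, add_sub_cancel_left, sub_sub,
      mul_assoc, t]
  have hcont : Continuous fun u : ℝ => exp (u • R) * (R + S - R) * exp ((t - u) • (R + S)) :=
    ((continuous_exp_smul R).mul continuous_const).mul
      ((continuous_exp_smul _).comp (continuous_const.sub continuous_id))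
  simp only [hsnoc]
  rw [integral_const_mul_of_integrable hcont.integrableOn_Icc, integral_Icc_eq_integral_Ioc,
    ← intervalIntegral.integral_of_le (sub_nonneg.2 hs.2),
    integral_exp_smul_mul_sub_mul_exp_smul, mul_sub]
  rfl

lemma remainder_succ (R S : B) (n : ℕ) :
    remainder R S (n + 1) = remainder R S n - term R S n := by
  rw [remainder, integral_simplex_succ (integrableOn_simplex_integrand R S _ _),
    setIntegral_congr_fun (measurableSet_simplex n) fun s hs => integral_Icc_integrand_snoc R S hs,
    integral_sub (integrableOn_simplex_integrand R S _ _) (integrableOn_simplex_integrand R S _ _)]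
  rfl

lemma exp_add_eq_sum_range_term_add_remainder (R S : B) (n : ℕ) :
    exp (R + S) = ∑ k ∈ Finset.range n, term R S k + remainder R S n := by
  induction n with
  | zero => simp [remainder, integral_simplex_zero_integrand]
  | succ n ih =>
    rw [Finset.sum_range_succ, remainder_succ, ih]
    abel

lemma term_zero (R S : B) : term R S 0 = exp R :=
  integral_simplex_zero_integrand R S R

variable [NormOneClass B]

theorem hasSum_term (R S : B) : HasSum (term R S) (exp (R + S)) := by
  rw [hasSum_iff_tendsto_nat_of_summable_norm (summable_norm_term R S)]
  have h := (tendsto_remainder_atTop R S).const_sub (exp (R + S))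
  rw [sub_zero] at h
  exact h.congr fun n =>
    (eq_sub_of_add_eq (exp_add_eq_sum_range_term_add_remainder R S n).symm).symm

end BanachAlgebra

end Volterra

open Volterra in
/-- **Volterra expansion formula.** For `R S` in a unital Banach algebra `B` over `ℝ` and
`k ≥ 1`, let `I k` be the Bochner integral over the simplex
`Δ_k = {s ∈ ℝ^k | sᵢ ≥ 0, s₁ + ⋯ + s_k ≤ 1}` of
`exp(s₁ R) * S * exp(s₂ R) * S * ⋯ * S * exp(s_{k+1} R)` (with `k` factors of `S` and
`s_{k+1} = 1 - (s₁ + ⋯ + s_k)`).  Then `‖I k‖ ≤ exp ‖R‖ * ‖S‖^k / k!`, the series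
`∑_{k ≥ 1} I k` converges absolutely, and `exp (R + S) = exp R + ∑_{k ≥ 1} I k`. -/
theorem volterra_expansion
    {B : Type*} [NormedRing B] [NormedAlgebra ℝ B] [CompleteSpace B] [NormOneClass B]
    (R S : B) (I : ℕ → B)
    (hI : ∀ k : ℕ, 1 ≤ k →
      I k = ∫ s in {s : Fin k → ℝ | (∀ i, 0 ≤ s i) ∧ ∑ i, s i ≤ 1},
        (List.ofFn (fun i : Fin k => exp (s i • R) * S)).prod *
          exp ((1 - ∑ i, s i) • R)) :
    (∀ k : ℕ, 1 ≤ k → ‖I k‖ ≤ Real.exp ‖R‖ * ‖S‖ ^ k / (Nat.factorial k)) ∧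
    Summable (fun k : ℕ => ‖I (k + 1)‖) ∧
    exp (R + S) = exp R + ∑' k : ℕ, I (k + 1) := by
  have hterm : ∀ k, I (k + 1) = term R S (k + 1) := fun k => hI (k + 1) k.succ_pos
  refine ⟨fun k hk => ?_, ?_, ?_⟩
  · obtain ⟨k, rfl⟩ := Nat.exists_eq_add_of_le' hk
    exact hterm k ▸ norm_term_le R S (k + 1)
  · simpa only [hterm] using (summable_nat_add_iff 1).2 (summable_norm_term R S)
  · rw [← (hasSum_term R S).tsum_eq, (hasSum_term R S).summable.tsum_eq_zero_add, term_zero]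
    simp only [hterm]
end

section
/- Let R, S ∈ B and c ∈ ℝ, and suppose that ‖exp(−s·R)‖ ≤ exp(−s·c) for all s ∈ [0,1]. Then ‖exp(−R+S)‖ ≤ exp(−c)·exp(‖S‖). -/
/-!
Split `-R + S` into `n` equal steps of size `t = 1/n`. The perturbation estimate
`‖exp (a + b)‖ ≤ ‖exp a‖ + ‖b‖ e^{‖a‖ + ‖b‖}` and the hypothesis at `s = t` give
`‖exp (t • (-R + S))‖ ≤ e^{-tc} + t ‖S‖ e^{t (‖R‖ + ‖S‖)} ≤ exp (t (-c + ‖S‖ e^{t δ}))`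
with `δ = ‖R‖ + ‖S‖ + c`, using `x + y ≤ x e^{y/x}`. Raising this to the `n`-th power bounds
`‖exp (-R + S)‖` by `exp (-c + ‖S‖ e^{δ/n})`, which tends to `e^{-c} e^{‖S‖}`.
-/

open NormedSpace Filter Topology

lemma Real.exp_sub_one_le_mul_exp (y : ℝ) : Real.exp y - 1 ≤ y * Real.exp y := by
  have h := mul_le_mul_of_nonneg_right (Real.one_sub_le_exp_neg y) (Real.exp_pos y).le
  rw [← Real.exp_add, neg_add_cancel, Real.exp_zero] at h
  linarith

lemma Real.add_le_mul_exp_div {x : ℝ} (hx : 0 < x) (y : ℝ) : x + y ≤ x * Real.exp (y / x) := by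
  calc x + y = x * (y / x + 1) := by field_simp; ring
    _ ≤ x * Real.exp (y / x) := by gcongr; exact Real.add_one_le_exp _

section

variable {B : Type*} [NormedRing B] [NormOneClass B]

lemma norm_add_pow_sub_pow_le (a b : B) (m : ℕ) :
    ‖(a + b) ^ m - a ^ m‖ ≤ (‖a‖ + ‖b‖) ^ m - ‖a‖ ^ m := by
  induction m with
  | zero => simp
  | succ m ih =>
    have hsplit :
        (a + b) ^ (m + 1) - a ^ (m + 1) = ((a + b) ^ m - a ^ m) * (a + b) + a ^ m * b := by
      rw [pow_succ, pow_succ]; noncomm_ring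
    calc ‖(a + b) ^ (m + 1) - a ^ (m + 1)‖
        ≤ ‖(a + b) ^ m - a ^ m‖ * ‖a + b‖ + ‖a ^ m‖ * ‖b‖ := by
          rw [hsplit]
          exact (norm_add_le _ _).trans (add_le_add (norm_mul_le _ _) (norm_mul_le _ _))
      _ ≤ ((‖a‖ + ‖b‖) ^ m - ‖a‖ ^ m) * (‖a‖ + ‖b‖) + ‖a‖ ^ m * ‖b‖ := by
          gcongr
          · exact ih.trans' (norm_nonneg _)
          · exact norm_add_le a b
          · exact norm_pow_le a m
      _ = (‖a‖ + ‖b‖) ^ (m + 1) - ‖a‖ ^ (m + 1) := by ring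

variable [NormedAlgebra ℝ B] [CompleteSpace B]

lemma norm_exp_add_sub_exp_le (a b : B) :
    ‖exp (a + b) - exp a‖ ≤ Real.exp (‖a‖ + ‖b‖) - Real.exp ‖a‖ := by
  have hB := (exp_series_hasSum_exp' (𝕂 := ℝ) (a + b)).sub (exp_series_hasSum_exp' (𝕂 := ℝ) a)
  have hℝ := (expSeries_div_hasSum_exp (‖a‖ + ‖b‖)).sub (expSeries_div_hasSum_exp ‖a‖)
  rw [← Real.exp_eq_exp_ℝ] at hℝ
  refine hB.norm_le_of_bounded hℝ fun n ↦ ?_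
  rw [← smul_sub, norm_smul, norm_inv, Real.norm_natCast, ← sub_div, ← inv_mul_eq_div]
  gcongr
  exact norm_add_pow_sub_pow_le a b n

lemma norm_exp_add_le (a b : B) : ‖exp (a + b)‖ ≤ ‖exp a‖ + ‖b‖ * Real.exp (‖a‖ + ‖b‖) := by
  calc ‖exp (a + b)‖ ≤ ‖exp a‖ + ‖exp (a + b) - exp a‖ := norm_le_insert' _ _
    _ ≤ ‖exp a‖ + Real.exp ‖a‖ * (Real.exp ‖b‖ - 1) := by
        gcongr
        rw [mul_sub_one, ← Real.exp_add]
        exact norm_exp_add_sub_exp_le a b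
    _ ≤ ‖exp a‖ + ‖b‖ * Real.exp (‖a‖ + ‖b‖) := by
        refine add_le_add_right ?_ _
        calc Real.exp ‖a‖ * (Real.exp ‖b‖ - 1) ≤ Real.exp ‖a‖ * (‖b‖ * Real.exp ‖b‖) := by
              gcongr; exact Real.exp_sub_one_le_mul_exp _
          _ = ‖b‖ * Real.exp (‖a‖ + ‖b‖) := by rw [Real.exp_add]; ring

lemma norm_exp_le_norm_exp_inv_smul_pow {n : ℕ} (hn : n ≠ 0) (x : B) :
    ‖exp x‖ ≤ ‖exp ((n : ℝ)⁻¹ • x)‖ ^ n := by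
  let _ : NormedAlgebra ℚ B := NormedAlgebra.restrictScalars ℚ ℝ B
  calc ‖exp x‖ = ‖exp ((n : ℝ)⁻¹ • x) ^ n‖ := by
        rw [← exp_nsmul, ← Nat.cast_smul_eq_nsmul ℝ, smul_smul,
          mul_inv_cancel₀ (Nat.cast_ne_zero.mpr hn), one_smul]
    _ ≤ ‖exp ((n : ℝ)⁻¹ • x)‖ ^ n := norm_pow_le _ n

lemma norm_exp_smul_neg_add_le {R S : B} {c t : ℝ} (ht : 0 ≤ t)
    (hR : ‖exp (-(t • R))‖ ≤ Real.exp (-(t * c))) :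
    ‖exp (t • (-R + S))‖ ≤ Real.exp (t * (-c + ‖S‖ * Real.exp (t * (‖R‖ + ‖S‖ + c)))) := by
  calc ‖exp (t • (-R + S))‖
      ≤ ‖exp (-(t • R))‖ + ‖t • S‖ * Real.exp (‖-(t • R)‖ + ‖t • S‖) := by
        rw [smul_add, smul_neg]; exact norm_exp_add_le _ _
    _ ≤ Real.exp (-(t * c)) + t * ‖S‖ * Real.exp (t * (‖R‖ + ‖S‖)) := by
        rw [norm_neg, norm_smul, norm_smul, Real.norm_of_nonneg ht, ← mul_add]
        gcongr
    _ ≤ Real.exp (-(t * c)) *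
          Real.exp (t * ‖S‖ * Real.exp (t * (‖R‖ + ‖S‖)) / Real.exp (-(t * c))) :=
        Real.add_le_mul_exp_div (Real.exp_pos _) _
    _ = Real.exp (t * (-c + ‖S‖ * Real.exp (t * (‖R‖ + ‖S‖ + c)))) := by
        rw [div_eq_mul_inv, ← Real.exp_neg, mul_assoc, ← Real.exp_add, ← Real.exp_add]
        ring_nf

end

/-- If `R, S` are elements of a unital Banach algebra `B` over `ℝ` and `c ∈ ℝ` is such that
`‖exp (-s • R)‖ ≤ exp (-s * c)` for all `s ∈ [0, 1]`, then
`‖exp (-R + S)‖ ≤ exp (-c) * exp ‖S‖`. -/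
theorem norm_exp_neg_add_le
    {B : Type*} [NormedRing B] [NormedAlgebra ℝ B] [CompleteSpace B] [NormOneClass B]
    (R S : B) (c : ℝ)
    (h : ∀ s ∈ Set.Icc (0 : ℝ) 1, ‖exp (-(s • R))‖ ≤ Real.exp (-(s * c))) :
    ‖exp (-R + S)‖ ≤ Real.exp (-c) * Real.exp ‖S‖ := by
  set δ := ‖R‖ + ‖S‖ + c
  have step : ∀ n : ℕ, n ≠ 0 → ‖exp (-R + S)‖ ≤ Real.exp (-c + ‖S‖ * Real.exp (δ / n)) := by
    intro n hn
    have hn' : (n : ℝ) ≠ 0 := Nat.cast_ne_zero.mpr hn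
    have ht : (n : ℝ)⁻¹ ∈ Set.Icc (0 : ℝ) 1 :=
      ⟨by positivity, inv_le_one_of_one_le₀ (Nat.one_le_cast.mpr (Nat.one_le_iff_ne_zero.mpr hn))⟩
    calc ‖exp (-R + S)‖ ≤ ‖exp ((n : ℝ)⁻¹ • (-R + S))‖ ^ n :=
          norm_exp_le_norm_exp_inv_smul_pow hn _
      _ ≤ Real.exp ((n : ℝ)⁻¹ * (-c + ‖S‖ * Real.exp ((n : ℝ)⁻¹ * δ))) ^ n := by
          gcongr
          exact norm_exp_smul_neg_add_le ht.1 (h _ ht)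
      _ = Real.exp (-c + ‖S‖ * Real.exp (δ / n)) := by
          rw [← Real.exp_nat_mul, ← mul_assoc, mul_inv_cancel₀ hn', one_mul, inv_mul_eq_div]
  have hlim : Tendsto (fun n : ℕ ↦ Real.exp (-c + ‖S‖ * Real.exp (δ / n))) atTop
      (𝓝 (Real.exp (-c + ‖S‖ * Real.exp 0))) := by
    have hcont : Continuous fun u : ℝ ↦ Real.exp (-c + ‖S‖ * Real.exp u) := by fun_prop
    exact (hcont.tendsto 0).comp (tendsto_const_div_atTop_nhds_zero_nat δ)
  rw [Real.exp_zero, mul_one, Real.exp_add] at hlim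
  exact ge_of_tendsto hlim (eventually_ne_atTop 0 |>.mono step)
end

section
/- Let n ≥ 1, let R be an n×n complex Hermitian matrix with smallest eigenvalue m(R), and let S be an arbitrary n×n complex matrix. Then ‖exp(−R+S)‖ ≤ exp(−m(R))·exp(‖S‖). -/
open NormedSpace RCLike

/-!
Write `m = m(R)` and `T = -R + S`, viewed as an operator on `ℂⁿ`. For every vector `y`,
`re ⟪T y, y⟫ = -re ⟪R y, y⟫ + re ⟪S y, y⟫ ≤ (-m + ‖S‖) ‖y‖²`, the bound on `⟪R y, y⟫` coming
from expanding `y` in an orthonormal eigenbasis of `R`. Along the trajectory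
`u(t) = exp (t T) x` the derivative of `‖u‖²` is `2 re ⟪T u, u⟫ ≤ 2 (-m + ‖S‖) ‖u‖²`, so
Grönwall's inequality gives `‖exp T x‖ ≤ exp (-m + ‖S‖) ‖x‖`.
-/

section EigenbasisBound

variable {𝕜 E : Type*} [RCLike 𝕜] [NormedAddCommGroup E] [InnerProductSpace 𝕜 E]

local notation "⟪" x ", " y "⟫" => inner 𝕜 x y

theorem LinearMap.IsSymmetric.mul_norm_sq_le_re_inner_apply_self {T : E →ₗ[𝕜] E}
    (hT : T.IsSymmetric) {ι : Type*} [Fintype ι] (b : OrthonormalBasis ι 𝕜 E) {μ : ι → ℝ}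
    (hb : ∀ i, T (b i) = (μ i : 𝕜) • b i) {m : ℝ} (hm : ∀ i, m ≤ μ i) (x : E) :
    m * ‖x‖ ^ 2 ≤ re ⟪T x, x⟫ := by
  have h_expand : ⟪T x, x⟫ = ∑ i, (μ i : 𝕜) * (⟪x, b i⟫ * ⟪b i, x⟫) := by
    rw [← b.sum_inner_mul_inner]
    refine Finset.sum_congr rfl fun i _ => ?_
    rw [hT, hb, inner_smul_right, mul_assoc]
  rw [h_expand, ← b.sum_sq_norm_inner_left, Finset.mul_sum, map_sum]
  refine Finset.sum_le_sum fun i _ => ?_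
  rw [re_ofReal_mul, inner_mul_symm_re_eq_norm, norm_mul, norm_inner_symm (b i) x, ← sq]
  exact mul_le_mul_of_nonneg_right (hm i) (sq_nonneg _)

end EigenbasisBound

theorem Matrix.IsHermitian.iInf_eigenvalues_mul_norm_sq_le_re_inner {𝕜 ι : Type*} [RCLike 𝕜]
    [Fintype ι] [DecidableEq ι] {A : Matrix ι ι 𝕜} (hA : A.IsHermitian)
    (x : EuclideanSpace 𝕜 ι) :
    (⨅ i, hA.eigenvalues i) * ‖x‖ ^ 2 ≤ re (inner 𝕜 (Matrix.toEuclideanLin A x) x) :=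
  (Matrix.isSymmetric_toEuclideanLin_iff.mpr hA).mul_norm_sq_le_re_inner_apply_self
    hA.eigenvectorBasis
    (fun i => WithLp.ofLp_injective 2 (by simpa using hA.mulVec_eigenvectorBasis i))
    (ciInf_le (Set.finite_range _).bddBelow) x

theorem ContinuousLinearMap.re_inner_apply_self_le_opNorm_mul_sq {𝕜 E : Type*} [RCLike 𝕜]
    [NormedAddCommGroup E] [InnerProductSpace 𝕜 E] (T : E →L[𝕜] E) (y : E) :
    re (inner 𝕜 (T y) y) ≤ ‖T‖ * ‖y‖ ^ 2 :=
  calc re (inner 𝕜 (T y) y) ≤ ‖T y‖ * ‖y‖ := re_inner_le_norm _ _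
    _ ≤ ‖T‖ * ‖y‖ * ‖y‖ := by gcongr; exact T.le_opNorm y
    _ = ‖T‖ * ‖y‖ ^ 2 := by ring

section GronwallBound

variable {E : Type*} [NormedAddCommGroup E] [InnerProductSpace ℂ E] [CompleteSpace E]

local notation "⟪" x ", " y "⟫" => inner ℂ x y

theorem hasDerivAt_exp_smul_apply (T : E →L[ℂ] E) (x : E) (t : ℝ) :
    HasDerivAt (fun s : ℝ => exp (s • T) x) (T (exp (t • T) x)) t :=
  ((ContinuousLinearMap.apply ℂ E x).restrictScalars ℝ).hasFDerivAt.comp_hasDerivAt t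
    (hasDerivAt_exp_smul_const' T t)

theorem hasDerivAt_norm_sq_exp_smul_apply (T : E →L[ℂ] E) (x : E) (t : ℝ) :
    HasDerivAt (fun s : ℝ => ‖exp (s • T) x‖ ^ 2)
      (2 * re ⟪T (exp (t • T) x), exp (t • T) x⟫) t := by
  have hu := hasDerivAt_exp_smul_apply T x t
  have h := reCLM.hasFDerivAt.comp_hasDerivAt t (hu.inner ℂ hu)
  have hfun : (reCLM ∘ fun s : ℝ => ⟪exp (s • T) x, exp (s • T) x⟫) =
      fun s : ℝ => ‖exp (s • T) x‖ ^ 2 := by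
    funext s
    simp only [Function.comp_apply, reCLM_apply, inner_self_eq_norm_sq]
  rw [hfun] at h
  refine h.congr_deriv ?_
  rw [reCLM_apply, map_add, inner_re_symm (𝕜 := ℂ) (exp (t • T) x)]
  ring

theorem norm_exp_le_of_re_inner_apply_self_le (T : E →L[ℂ] E) {K : ℝ}
    (hK : ∀ y, re ⟪T y, y⟫ ≤ K * ‖y‖ ^ 2) : ‖exp T‖ ≤ Real.exp K := by
  refine ContinuousLinearMap.opNorm_le_bound _ (Real.exp_pos K).le fun x => ?_
  have hφ := hasDerivAt_norm_sq_exp_smul_apply T x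
  have hgronwall := le_gronwallBound_of_liminf_deriv_right_le (δ := ‖x‖ ^ 2) (K := 2 * K)
    (ε := 0) (a := 0) (b := 1)
    (fun t _ => (hφ t).continuousAt.continuousWithinAt)
    (fun t _ r hr => (hφ t).hasDerivWithinAt.liminf_right_slope_le hr)
    (by simp) (fun t _ => by linarith [hK (exp (t • T) x)]) 1 (by norm_num)
  simp only [one_smul, gronwallBound_ε0, sub_zero, mul_one] at hgronwall
  have hsq : ‖x‖ ^ 2 * Real.exp (2 * K) = (Real.exp K * ‖x‖) ^ 2 := by
    rw [mul_pow, ← Real.exp_nat_mul]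
    push_cast
    ring
  exact (pow_le_pow_iff_left₀ (norm_nonneg _) (by positivity) two_ne_zero).mp (hsq ▸ hgronwall)

end GronwallBound

section MatrixExp

-- `map_exp` wants a normed ring; any matrix norm induces the entrywise topology `exp` is built on.
attribute [local instance] Matrix.linftyOpNormedRing Matrix.linftyOpNormedAlgebra

theorem Matrix.toEuclideanCLM_exp {𝕜 ι : Type*} [RCLike 𝕜] [Fintype ι] [DecidableEq ι]
    (M : Matrix ι ι 𝕜) :
    Matrix.toEuclideanCLM (𝕜 := 𝕜) (exp M) = exp (Matrix.toEuclideanCLM (𝕜 := 𝕜) M) :=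
  map_exp (Matrix.toEuclideanCLM (𝕜 := 𝕜) (n := ι))
    (Matrix.toEuclideanCLM (𝕜 := 𝕜) (n := ι)).toAlgEquiv.toLinearMap.continuous_of_finiteDimensional
    M

end MatrixExp

theorem opNorm_exp_neg_hermitian_add_le_general {n : ℕ}
    (R S : Matrix (Fin n) (Fin n) ℂ) (hR : R.IsHermitian) :
    ‖Matrix.toEuclideanCLM (𝕜 := ℂ) (exp (-R + S))‖ ≤
      Real.exp (-(⨅ i, hR.eigenvalues i)) *
        Real.exp ‖Matrix.toEuclideanCLM (𝕜 := ℂ) S‖ := by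
  set Φ := Matrix.toEuclideanCLM (𝕜 := ℂ) (n := Fin n)
  rw [Matrix.toEuclideanCLM_exp, ← Real.exp_add]
  refine norm_exp_le_of_re_inner_apply_self_le _ fun y => ?_
  have hR_bound := hR.iInf_eigenvalues_mul_norm_sq_le_re_inner y
  have hS_bound := (Φ S).re_inner_apply_self_le_opNorm_mul_sq y
  have h_split : re (inner ℂ (Φ (-R + S) y) y) =
      -re (inner ℂ (Matrix.toEuclideanLin R y) y) + re (inner ℂ (Φ S y) y) := by
    simp [Φ, inner_neg_left, ← Matrix.coe_toEuclideanCLM_eq_toEuclideanLin]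
  linarith

/-- Let `R` be an `n × n` complex Hermitian matrix (`n ≥ 1`) with smallest eigenvalue `m(R)`
and let `S` be an arbitrary `n × n` complex matrix.  With `‖·‖` the operator norm induced by
the Euclidean norm on `ℂⁿ`, one has `‖exp (-R + S)‖ ≤ exp (-m(R)) * exp ‖S‖`. -/
theorem opNorm_exp_neg_hermitian_add_le {n : ℕ} (hn : 1 ≤ n)
    (R S : Matrix (Fin n) (Fin n) ℂ) (hR : R.IsHermitian) :
    ‖Matrix.toEuclideanCLM (𝕜 := ℂ) (exp (-R + S))‖ ≤
      Real.exp (-(⨅ i, hR.eigenvalues i)) *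
        Real.exp ‖Matrix.toEuclideanCLM (𝕜 := ℂ) S‖ :=
  opNorm_exp_neg_hermitian_add_le_general R S hR
end

section
/- The exponential map exp : B → B is Fréchet differentiable at every point A ∈ B, and its derivative at A is the continuous linear map H ↦ ∫₀¹ exp(s·A)·H·exp((1−s)·A) ds (a Bochner integral). -/
/-!
`exp` is analytic, hence Fréchet differentiable, so it remains to identify its derivative in
each direction `H`. By Duhamel's formula the difference quotient of `t ↦ exp (A + t • H)` at `0` is
`∫₀¹ exp (s • A) * H * exp ((1 - s) • (A + t • H)) ds`, which is continuous in `t`; letting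
`t → 0` gives the stated integral.
-/

open NormedSpace intervalIntegral

section

variable {B : Type*} [NormedRing B] [NormedAlgebra ℝ B] [CompleteSpace B]

@[fun_prop]
theorem continuous_exp_real : Continuous (exp : B → B) :=
  continuous_iff_continuousAt.2 fun x => (exp_analytic (𝕂 := ℝ) x).continuousAt

theorem hasDerivAt_exp_smul_mul_exp_one_sub_smul (X Z : B) (s : ℝ) :
    HasDerivAt (fun u : ℝ => exp (u • X) * exp ((1 - u) • Z))
      (exp (s • X) * (X - Z) * exp ((1 - s) • Z)) s := by
  have hZ : HasDerivAt (fun u : ℝ => exp ((1 - u) • Z)) (-(Z * exp ((1 - s) • Z))) s := by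
    simpa [Function.comp_def] using
      (hasDerivAt_exp_smul_const' Z (1 - s)).scomp s ((hasDerivAt_id s).const_sub 1)
  refine ((hasDerivAt_exp_smul_const X s).mul hZ).congr_deriv ?_
  rw [mul_sub, sub_mul, mul_neg, ← mul_assoc, ← sub_eq_add_neg]

/-- Duhamel's formula. -/
theorem exp_sub_exp_eq_integral (X Z : B) :
    exp Z - exp X = ∫ s in (0 : ℝ)..1, exp (s • X) * (Z - X) * exp ((1 - s) • Z) := by
  have hFTC := integral_eq_sub_of_hasDerivAt
    (fun s _ => hasDerivAt_exp_smul_mul_exp_one_sub_smul X Z s)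
    (Continuous.intervalIntegrable (by fun_prop) 0 1)
  simp only [one_smul, sub_self, zero_smul, exp_zero, mul_one, one_mul, sub_zero] at hFTC
  rw [← neg_sub, ← neg_sub X]
  simp only [mul_neg, neg_mul, integral_neg, hFTC]

theorem hasDerivAt_exp_add_smul (A H : B) :
    HasDerivAt (fun t : ℝ => exp (A + t • H))
      (∫ s in (0 : ℝ)..1, exp (s • A) * H * exp ((1 - s) • A)) 0 := by
  have hcont : Continuous fun t : ℝ =>
      ∫ s in (0 : ℝ)..1, exp (s • A) * H * exp ((1 - s) • (A + t • H)) :=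
    continuous_parametric_intervalIntegral_of_continuous' (by fun_prop) 0 1
  have hlim := (hcont.tendsto 0).mono_left (nhdsWithin_le_nhds (s := {0}ᶜ))
  simp only [zero_smul, add_zero] at hlim
  rw [hasDerivAt_iff_tendsto_slope]
  refine hlim.congr' (eventually_nhdsWithin_of_forall fun t (ht : t ≠ 0) => ?_)
  rw [slope_def_module, zero_smul, add_zero, exp_sub_exp_eq_integral, ← integral_smul]
  simp only [add_sub_cancel_left, sub_zero, mul_smul_comm, smul_mul_assoc, inv_smul_smul₀ ht]

end

theorem exp_hasFDerivAt_general
    {B : Type*} [NormedRing B] [NormedAlgebra ℝ B] [CompleteSpace B]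
    (A : B) :
    ∃ D : B →L[ℝ] B,
      (∀ H : B, D H = ∫ s in (0 : ℝ)..1, exp (s • A) * H * exp ((1 - s) • A)) ∧
      HasFDerivAt exp D A := by
  have hexp : HasFDerivAt exp (fderiv ℝ exp A) A := (exp_analytic A).differentiableAt.hasFDerivAt
  refine ⟨fderiv ℝ exp A, fun H => ?_, hexp⟩
  have hline : HasDerivAt (fun t : ℝ => exp (A + t • H)) (fderiv ℝ exp A H) 0 := by
    simpa [Function.comp_def] using hexp.comp_hasDerivAt_of_eq (0 : ℝ)
      (((hasDerivAt_id (0 : ℝ)).smul_const H).const_add A) (by simp)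
  exact hline.unique (hasDerivAt_exp_add_smul A H)

/-- In a unital Banach algebra `B` over `ℝ`, the exponential map is Fréchet differentiable at
every point `A`, with derivative the continuous linear map
`H ↦ ∫₀¹ exp (s • A) * H * exp ℝ ((1 - s) • A) ds`. -/
theorem exp_hasFDerivAt
    {B : Type*} [NormedRing B] [NormedAlgebra ℝ B] [CompleteSpace B] [NormOneClass B]
    (A : B) :
    ∃ D : B →L[ℝ] B,
      (∀ H : B, D H = ∫ s in (0 : ℝ)..1, exp (s • A) * H * exp ((1 - s) • A)) ∧
      HasFDerivAt exp D A :=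
  exp_hasFDerivAt_general A
end

section
/- Let c₁, c₂, u, v ∈ B satisfy the relations c₁² = c₂² = −1, c₁c₂ = −c₂c₁, u² = v² = 0, uv = −vu, and u·cᵢ = −cᵢ·u, v·cᵢ = −cᵢ·v for i = 1,2. For λ, t ∈ ℝ set B_{λ,t} := t·(u·c₁ + v·c₂) + λ·c₁c₂. Then exp(B_{λ,t}) = (cos λ)·1 + t²·k(λ)·uv + sinc(λ)·(λ·1 − t²·uv)·c₁c₂ + t·sinc(λ)·(u·c₁ + v·c₂), where sinc(λ) := (sin λ)/λ and k(λ) := (sin λ − λ cos λ)/λ² for λ ≠ 0, extended continuously by sinc(0) = 1 and k(0) = 0. -/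
/-!
Write the exponent as `X = t S + a J` with `S = u c₁ + v c₂`, `J = c₁ c₂`, and put `W = u v J`.
The relations give `J² = -1`, `S² = -2W`, `JS = -SJ` and `W u = W v = 0`, hence `X² = -a² + 2N`
with `N = -t² W`, `N² = 0` and `N X = a t² u v`. So `X²` is a scalar plus a square-zero element:
`X^(2m) = (-a²)^m + 2m (-a²)^(m-1) N` and `X^(2m+1) = X^(2m) X`. Summing the even and odd parts
of the exponential series leaves the scalar series of `cos a`, `sinc a` and `k(a)`.
-/

open NormedSpace

/-- `sinc a = sin a / a`, extended by `sinc 0 = 1`. -/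
noncomputable def sincFun (a : ℝ) : ℝ := if a = 0 then 1 else Real.sin a / a

/-- `k a = (sin a - a * cos a) / a²`, extended by `k 0 = 0`. -/
noncomputable def kFun (a : ℝ) : ℝ :=
  if a = 0 then 0 else (Real.sin a - a * Real.cos a) / a ^ 2

open scoped Nat

theorem hasSum_cos_neg_sq (a : ℝ) :
    HasSum (fun m : ℕ => (-a ^ 2) ^ m / (2 * m)!) (Real.cos a) := by
  simpa only [neg_pow (a ^ 2), ← pow_mul] using Real.hasSum_cos a

theorem hasSum_sincFun (a : ℝ) :
    HasSum (fun m : ℕ => (-a ^ 2) ^ m / (2 * m + 1)!) (sincFun a) := by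
  rcases eq_or_ne a 0 with rfl | ha
  · rw [sincFun, if_pos rfl]
    refine (hasSum_ite_eq 0 (1 : ℝ)).congr_fun fun m => ?_
    rcases eq_or_ne m 0 with rfl | hm <;> simp [*]
  · rw [sincFun, if_neg ha]
    refine ((Real.hasSum_sin a).div_const a).congr_fun fun m => ?_
    rw [neg_pow (a ^ 2), ← pow_mul, pow_succ]
    field_simp

theorem hasSum_sincFun' (a : ℝ) :
    HasSum (fun m : ℕ => 2 * m * (-a ^ 2) ^ (m - 1) / (2 * m)!) (sincFun a) := by
  refine (hasSum_nat_add_iff' 1).mp ?_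
  simp only [Finset.sum_range_one, Nat.cast_zero, mul_zero, zero_mul, zero_div, sub_zero]
  refine (hasSum_sincFun a).congr_fun fun m => ?_
  rw [Nat.add_sub_cancel, mul_add_one 2 m, Nat.factorial_succ]
  push_cast
  field_simp
  ring

theorem hasSum_kFun (a : ℝ) :
    HasSum (fun m : ℕ => 2 * m * (-a ^ 2) ^ (m - 1) * a / (2 * m + 1)!) (kFun a) := by
  rcases eq_or_ne a 0 with rfl | ha
  · simp [kFun]
  rw [kFun, if_neg ha]
  refine (((Real.hasSum_sin a).sub ((Real.hasSum_cos a).mul_left a)).div_const (a ^ 2)).congr_fun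
    fun m => ?_
  rcases m with _ | m
  · simp
  · rw [Nat.add_sub_cancel, Nat.factorial_succ (2 * (m + 1))]
    rw [neg_pow (a ^ 2), ← pow_mul]
    push_cast
    field_simp
    ring

-- The truncated `m - 1` is harmless: at `m = 0` the factor `m` vanishes.
theorem smul_one_add_pow_of_mul_self_eq_zero {R A : Type*} [CommSemiring R] [Semiring A]
    [Algebra R A] {N : A} (hN : N * N = 0) (c : R) (m : ℕ) :
    (c • (1 : A) + N) ^ m = c ^ m • (1 : A) + (m * c ^ (m - 1)) • N := by
  induction m with
  | zero => simp
  | succ m ih =>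
    have hcoeff : (m * c ^ (m - 1)) * c + c ^ m = (m + 1 : ℕ) * c ^ m := by
      rcases m with _ | m
      · simp
      · push_cast
        ring
    rw [pow_succ, ih, mul_add, mul_smul_comm, mul_one, add_mul, smul_mul_assoc, smul_mul_assoc,
      one_mul, hN, smul_zero, add_zero, smul_add, smul_smul, smul_smul, Nat.add_sub_cancel,
      ← hcoeff, add_smul, pow_succ, mul_comm c, mul_comm c, add_assoc]

theorem exp_eq_of_mul_self_eq_neg_sq_add {B : Type*} [NormedRing B] [NormedAlgebra ℝ B]
    [CompleteSpace B] {X N P : B} {a : ℝ} (hX : X * X = (-a ^ 2) • (1 : B) + (2 : ℝ) • N)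
    (hN : N * N = 0) (hNX : N * X = a • P) :
    exp X = Real.cos a • (1 : B) + sincFun a • (X + N) + kFun a • P := by
  have hN2 : ((2 : ℝ) • N) * ((2 : ℝ) • N) = 0 := by
    rw [smul_mul_smul, hN, smul_zero]
  have h_even (m : ℕ) : X ^ (2 * m) =
      (-a ^ 2) ^ m • (1 : B) + (2 * m * (-a ^ 2) ^ (m - 1)) • N := by
    rw [pow_mul, sq, hX, smul_one_add_pow_of_mul_self_eq_zero hN2, smul_smul]
    ring_nf
  have h_odd (m : ℕ) : X ^ (2 * m + 1) =
      (-a ^ 2) ^ m • X + (2 * m * (-a ^ 2) ^ (m - 1) * a) • P := by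
    rw [pow_succ, h_even, add_mul, smul_mul_assoc, smul_mul_assoc, one_mul, hNX, smul_smul]
  have hs_even : HasSum (fun m : ℕ => ((2 * m)! : ℝ)⁻¹ • X ^ (2 * m))
      (Real.cos a • (1 : B) + sincFun a • N) := by
    refine ((hasSum_cos_neg_sq a).smul_const 1).add ((hasSum_sincFun' a).smul_const N)
      |>.congr_fun fun m => ?_
    rw [h_even, smul_add, smul_smul, smul_smul, inv_mul_eq_div, inv_mul_eq_div]
  have hs_odd : HasSum (fun m : ℕ => ((2 * m + 1)! : ℝ)⁻¹ • X ^ (2 * m + 1))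
      (sincFun a • X + kFun a • P) := by
    refine ((hasSum_sincFun a).smul_const X).add ((hasSum_kFun a).smul_const P)
      |>.congr_fun fun m => ?_
    rw [h_odd, smul_add, smul_smul, smul_smul, inv_mul_eq_div, inv_mul_eq_div]
  rw [(exp_series_hasSum_exp' (𝕂 := ℝ) X).unique (hs_even.even_add_odd hs_odd)]
  module

section Clifford

variable {R : Type*} [Ring R]

theorem mul_mul_mul_of_anticomm {c y : R} (h : y * c = -(c * y)) (x d : R) :
    x * c * (y * d) = -(x * y * (c * d)) := by
  have h' : c * y = -(y * c) := by rw [h, neg_neg]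
  rw [mul_assoc, ← mul_assoc c, h']
  noncomm_ring

theorem commute_mul_of_anticomm {x y z : R} (hy : x * y = -(y * x)) (hz : x * z = -(z * x)) :
    Commute x (y * z) := by
  rw [Commute, SemiconjBy, ← mul_assoc, hy, neg_mul, mul_assoc, hz, mul_neg, neg_neg, mul_assoc]

variable {c₁ c₂ u v : R}

theorem bivector_mul_self (hc₁ : c₁ * c₁ = -1) (hc₂ : c₂ * c₂ = -1)
    (hc₁₂ : c₁ * c₂ = -(c₂ * c₁)) : c₁ * c₂ * (c₁ * c₂) = -1 := by
  rw [mul_mul_mul_of_anticomm hc₁₂, hc₁, hc₂, neg_one_mul, neg_neg]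

theorem uc_add_vc_mul_self (hu : u * u = 0) (hv : v * v = 0) (huv : u * v = -(v * u))
    (hc₁₂ : c₁ * c₂ = -(c₂ * c₁)) (huc₁ : u * c₁ = -(c₁ * u)) (huc₂ : u * c₂ = -(c₂ * u))
    (hvc₁ : v * c₁ = -(c₁ * v)) (hvc₂ : v * c₂ = -(c₂ * v)) :
    (u * c₁ + v * c₂) * (u * c₁ + v * c₂) = -(2 * (u * v * (c₁ * c₂))) := by
  have hvu : v * u = -(u * v) := by rw [huv, neg_neg]
  have hc₂₁ : c₂ * c₁ = -(c₁ * c₂) := by rw [hc₁₂, neg_neg]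
  simp only [add_mul, mul_add, mul_mul_mul_of_anticomm huc₁, mul_mul_mul_of_anticomm huc₂,
    mul_mul_mul_of_anticomm hvc₁, mul_mul_mul_of_anticomm hvc₂, hu, hv, hvu, hc₂₁]
  noncomm_ring

theorem bivector_mul_uc_add_vc (hc₁₂ : c₁ * c₂ = -(c₂ * c₁)) (huc₁ : u * c₁ = -(c₁ * u))
    (huc₂ : u * c₂ = -(c₂ * u)) (hvc₁ : v * c₁ = -(c₁ * v)) (hvc₂ : v * c₂ = -(c₂ * v)) :
    c₁ * c₂ * (u * c₁ + v * c₂) = -((u * c₁ + v * c₂) * (c₁ * c₂)) := by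
  have hc₁u : c₁ * u = -(u * c₁) := by rw [huc₁, neg_neg]
  have hc₁v : c₁ * v = -(v * c₁) := by rw [hvc₁, neg_neg]
  have hc₂₁ : c₂ * c₁ = -(c₁ * c₂) := by rw [hc₁₂, neg_neg]
  rw [mul_add, add_mul, mul_mul_mul_of_anticomm huc₂, mul_mul_mul_of_anticomm hvc₂,
    mul_mul_mul_of_anticomm hc₁₂ v, hc₁u, hc₁v, hc₂₁]
  noncomm_ring

theorem uv_bivector_mul_u_eq_zero (hu : u * u = 0) (huv : u * v = -(v * u))
    (huc₁ : u * c₁ = -(c₁ * u)) (huc₂ : u * c₂ = -(c₂ * u)) :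
    u * v * (c₁ * c₂) * u = 0 := by
  have hvu : v * u = -(u * v) := by rw [huv, neg_neg]
  rw [mul_assoc, ← (commute_mul_of_anticomm huc₁ huc₂).eq, ← mul_assoc, mul_assoc u v u, hvu,
    mul_neg, ← mul_assoc u u v, hu, zero_mul, neg_zero, zero_mul]

theorem uv_bivector_mul_v_eq_zero (hv : v * v = 0) (hvc₁ : v * c₁ = -(c₁ * v))
    (hvc₂ : v * c₂ = -(c₂ * v)) : u * v * (c₁ * c₂) * v = 0 := by
  rw [mul_assoc, ← (commute_mul_of_anticomm hvc₁ hvc₂).eq, ← mul_assoc, mul_assoc u v v, hv,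
    mul_zero, zero_mul]

end Clifford

theorem exp_clifford_two_dim_general
    {B : Type*} [NormedRing B] [NormedAlgebra ℝ B] [CompleteSpace B]
    (c₁ c₂ u v : B)
    (hc₁ : c₁ * c₁ = -1) (hc₂ : c₂ * c₂ = -1) (hc₁₂ : c₁ * c₂ = -(c₂ * c₁))
    (hu : u * u = 0) (hv : v * v = 0) (huv : u * v = -(v * u))
    (huc₁ : u * c₁ = -(c₁ * u)) (huc₂ : u * c₂ = -(c₂ * u))
    (hvc₁ : v * c₁ = -(c₁ * v)) (hvc₂ : v * c₂ = -(c₂ * v))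
    (a t : ℝ) :
    exp (t • (u * c₁ + v * c₂) + a • (c₁ * c₂)) =
      Real.cos a • (1 : B) + (t ^ 2 * kFun a) • (u * v) +
        sincFun a • ((a • (1 : B) - t ^ 2 • (u * v)) * (c₁ * c₂)) +
        (t * sincFun a) • (u * c₁ + v * c₂) := by
  set S := u * c₁ + v * c₂
  set J := c₁ * c₂
  set W := u * v * J
  have hSS : S * S = -(2 * W) := uc_add_vc_mul_self hu hv huv hc₁₂ huc₁ huc₂ hvc₁ hvc₂
  have hJS : J * S = -(S * J) := bivector_mul_uc_add_vc hc₁₂ huc₁ huc₂ hvc₁ hvc₂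
  have hJJ : J * J = -1 := bivector_mul_self hc₁ hc₂ hc₁₂
  have hWu : W * u = 0 := uv_bivector_mul_u_eq_zero hu huv huc₁ huc₂
  have hWv : W * v = 0 := uv_bivector_mul_v_eq_zero hv hvc₁ hvc₂
  have hWW : W * W = 0 := by simp only [W, ← mul_assoc, hWu, zero_mul]
  have hWS : W * S = 0 := by simp only [S, mul_add, ← mul_assoc, hWu, hWv, zero_mul, add_zero]
  have hWJ : W * J = -(u * v) := by rw [mul_assoc, hJJ, mul_neg_one]
  rw [exp_eq_of_mul_self_eq_neg_sq_add (N := (-t ^ 2) • W) (P := t ^ 2 • (u * v)) ?sq ?nil ?mul]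
  case sq =>
    simp only [add_mul, mul_add, smul_mul_smul, hSS, hJS, hJJ, two_mul]
    module
  case nil => rw [smul_mul_smul, hWW, smul_zero]
  case mul =>
    simp only [mul_add, smul_mul_smul, hWS, hWJ]
    module
  rw [sub_mul, smul_mul_assoc, one_mul, smul_mul_assoc]
  module

/-- Let `c₁, c₂, u, v` be elements of a unital Banach algebra `B` over `ℝ` satisfying
`c₁² = c₂² = -1`, `c₁c₂ = -c₂c₁`, `u² = v² = 0`, `uv = -vu`, and `u, v` anticommute with
`c₁, c₂`.  Then for `B_{λ,t} = t (u c₁ + v c₂) + λ c₁ c₂` one has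
`exp B_{λ,t} = cos λ + t² k(λ) uv + sinc λ (λ - t² uv) c₁ c₂ + t sinc λ (u c₁ + v c₂)`. -/
theorem exp_clifford_two_dim
    {B : Type*} [NormedRing B] [NormedAlgebra ℝ B] [CompleteSpace B] [NormOneClass B]
    (c₁ c₂ u v : B)
    (hc₁ : c₁ * c₁ = -1) (hc₂ : c₂ * c₂ = -1) (hc₁₂ : c₁ * c₂ = -(c₂ * c₁))
    (hu : u * u = 0) (hv : v * v = 0) (huv : u * v = -(v * u))
    (huc₁ : u * c₁ = -(c₁ * u)) (huc₂ : u * c₂ = -(c₂ * u))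
    (hvc₁ : v * c₁ = -(c₁ * v)) (hvc₂ : v * c₂ = -(c₂ * v))
    (a t : ℝ) :
    exp (t • (u * c₁ + v * c₂) + a • (c₁ * c₂)) =
      Real.cos a • (1 : B) + (t ^ 2 * kFun a) • (u * v) +
        sincFun a • ((a • (1 : B) - t ^ 2 • (u * v)) * (c₁ * c₂)) +
        (t * sincFun a) • (u * c₁ + v * c₂) :=
  exp_clifford_two_dim_general c₁ c₂ u v hc₁ hc₂ hc₁₂ hu hv huv huc₁ huc₂ hvc₁ hvc₂ a t
end

section
/- Let d ≥ 1 and let f : ℝ → ℝ be a smooth compactly supported function equal to 1 on a neighborhood of 0. Then the function (t,x) ↦ t^{d−1}·f'(‖x‖²)·‖x‖²·e^{−t²‖x‖²} is integrable on (0,∞) × ℝ^d, and −2·∫₀^∞ t^{d−1} ( ∫_{ℝ^d} f'(‖x‖²)·‖x‖²·e^{−t²‖x‖²} dx ) dt = π^{d/2}. -/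
/-!
Write `h u = f'(u) u`, which is continuous, compactly supported and vanishes near `0`. Away from
`x = 0` the Gaussian factor is then bounded by `exp (-ε t²)`, which gives integrability, so Fubini
applies. The `t`-integral is a Gamma integral, `∫₀^∞ t^(d-1) e^(-t²‖x‖²) dt = Γ(d/2) / (2 ‖x‖^d)`,
and polar coordinates turn the remaining `x`-integral into `d · vol(B) · ∫₀^∞ f'(r²) r dr`, where
`∫₀^∞ f'(r²) 2r dr = -f(0) = -1`. Finally `d · vol(B) · Γ(d/2) / 2 = vol(B) · Γ(d/2 + 1) = π^(d/2)`.
-/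

open MeasureTheory Real Set Filter Metric Topology Module

theorem HasCompactSupport.comp_norm_sq {E : Type*} [SeminormedAddCommGroup E] [ProperSpace E]
    {h : ℝ → ℝ} (hs : HasCompactSupport h) : HasCompactSupport fun x : E => h (‖x‖ ^ 2) := by
  obtain ⟨R, hR⟩ := hs.isBounded.subset_closedBall 0
  refine HasCompactSupport.intro (isCompact_closedBall (0 : E) √R) fun x hx => ?_
  refine image_eq_zero_of_notMem_tsupport fun hmem => hx ?_
  have hxR : ‖x‖ ^ 2 ≤ R := by simpa [abs_of_nonneg (sq_nonneg ‖x‖)] using hR hmem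
  simpa using Real.le_sqrt_of_sq_le hxR

theorem integral_Ioi_pow_mul_exp_neg_sq_mul_sq (n : ℕ) {r : ℝ} (hr : 0 < r) :
    ∫ t in Ioi (0 : ℝ), t ^ n * exp (-(t ^ 2) * r ^ 2) = Gamma ((n + 1) / 2) / 2 / r ^ (n + 1) := by
  have hgamma := integral_rpow_mul_exp_neg_mul_rpow two_pos (q := n)
    (by linarith [n.cast_nonneg (α := ℝ)]) (pow_pos hr 2)
  simp only [rpow_two, rpow_natCast] at hgamma
  have hpow : (r ^ 2) ^ (-((n : ℝ) + 1) / 2) = (r ^ (n + 1))⁻¹ := by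
    rw [← rpow_natCast r 2, ← rpow_mul hr.le, ← rpow_natCast, ← rpow_neg hr.le]
    congr 1; push_cast; ring
  calc _ = ∫ t in Ioi (0 : ℝ), t ^ n * exp (-r ^ 2 * t ^ 2) := by congr with t; ring_nf
    _ = _ := by rw [hgamma, hpow]; ring

section Radial

variable {E : Type*} [NormedAddCommGroup E] [ProperSpace E] [MeasurableSpace E] [BorelSpace E]
  (μ : Measure E) [IsFiniteMeasureOnCompacts μ] {h : ℝ → ℝ}

theorem integrable_pow_mul_radial_mul_exp_neg_sq_mul_norm_sq (hc : Continuous h)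
    (hs : HasCompactSupport h) (h0 : h =ᶠ[𝓝 0] 0) (n : ℕ) :
    Integrable (fun p : ℝ × E => p.1 ^ n * (h (‖p.2‖ ^ 2) * exp (-(p.1 ^ 2) * ‖p.2‖ ^ 2)))
      ((volume.restrict (Ioi 0)).prod μ) := by
  obtain ⟨ε, hε, hε0⟩ := Metric.eventually_nhds_iff.1 h0
  have hexp : ∀ t (x : E), |h (‖x‖ ^ 2)| * exp (-(t ^ 2) * ‖x‖ ^ 2) ≤
      |h (‖x‖ ^ 2)| * exp (-ε * t ^ 2) := by
    intro t x
    rcases eq_or_ne (h (‖x‖ ^ 2)) 0 with hx | hx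
    · simp [hx]
    have : ε ≤ ‖x‖ ^ 2 := by
      by_contra! hlt
      exact hx (hε0 (by rwa [Real.dist_0_eq_abs, abs_of_nonneg (by positivity)]))
    exact mul_le_mul_of_nonneg_left (exp_le_exp.2 (by nlinarith [sq_nonneg t])) (abs_nonneg _)
  have hgauss : Integrable (fun t : ℝ => t ^ n * exp (-ε * t ^ 2)) (volume.restrict (Ioi 0)) := by
    simpa only [IntegrableOn, rpow_natCast] using
      integrableOn_rpow_mul_exp_neg_mul_sq hε (s := n) (by linarith [n.cast_nonneg (α := ℝ)])
  have hradial : Integrable (fun x : E => h (‖x‖ ^ 2)) μ :=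
    (hc.comp (continuous_norm.pow 2)).integrable_of_hasCompactSupport hs.comp_norm_sq
  refine (hgauss.norm.mul_prod hradial.norm).mono' (by fun_prop) (.of_forall fun ⟨t, x⟩ => ?_)
  simp only [norm_mul, Real.norm_eq_abs, abs_exp]
  calc |t ^ n| * (|h (‖x‖ ^ 2)| * exp (-(t ^ 2) * ‖x‖ ^ 2))
      ≤ |t ^ n| * (|h (‖x‖ ^ 2)| * exp (-ε * t ^ 2)) :=
        mul_le_mul_of_nonneg_left (hexp t x) (abs_nonneg _)
    _ = _ := by ring

theorem integral_Ioi_pow_mul_integral_radial_mul_exp_neg_sq_mul_norm_sq [SFinite μ]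
    (hc : Continuous h) (hs : HasCompactSupport h) (h0 : h =ᶠ[𝓝 0] 0) (n : ℕ) :
    ∫ t in Ioi (0 : ℝ), t ^ n * ∫ x, h (‖x‖ ^ 2) * exp (-(t ^ 2) * ‖x‖ ^ 2) ∂μ =
      Gamma ((n + 1) / 2) / 2 * ∫ x, h (‖x‖ ^ 2) / ‖x‖ ^ (n + 1) ∂μ := by
  have hinner (x : E) : ∫ t in Ioi (0 : ℝ), t ^ n * (h (‖x‖ ^ 2) * exp (-(t ^ 2) * ‖x‖ ^ 2)) =
      Gamma ((n + 1) / 2) / 2 * (h (‖x‖ ^ 2) / ‖x‖ ^ (n + 1)) := by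
    rcases eq_or_ne x 0 with rfl | hx
    · simp [h0.self_of_nhds]
    simp_rw [mul_left_comm _ (h _), integral_const_mul,
      integral_Ioi_pow_mul_exp_neg_sq_mul_sq n (norm_pos_iff.2 hx)]
    ring
  simp_rw [← integral_const_mul]
  rw [integral_integral_swap (integrable_pow_mul_radial_mul_exp_neg_sq_mul_norm_sq μ hc hs h0 n)]
  simp only [hinner, integral_const_mul]

end Radial

theorem integral_Ioi_deriv_comp_sq_mul_self {f : ℝ → ℝ} (hf : ContDiff ℝ 1 f)
    (hs : HasCompactSupport f) : ∫ r in Ioi (0 : ℝ), deriv f (r ^ 2) * r = -f 0 / 2 := by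
  have hderiv (r : ℝ) : HasDerivAt (fun r => f (r ^ 2)) (deriv f (r ^ 2) * (2 * r)) r :=
    ((hf.differentiable one_ne_zero (r ^ 2)).hasDerivAt.comp r (hasDerivAt_pow 2 r)).congr_deriv
      (by simp)
  have hcs : HasCompactSupport fun r : ℝ => deriv f (r ^ 2) := by
    simpa [Real.norm_eq_abs, sq_abs] using hs.deriv.comp_norm_sq (E := ℝ)
  have hint : IntegrableOn (fun r => deriv f (r ^ 2) * (2 * r)) (Ioi 0) :=
    (((hf.continuous_deriv le_rfl).comp (continuous_pow 2)).mul (by fun_prop)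
      |>.integrable_of_hasCompactSupport hcs.mul_right).integrableOn
  have hlim : Tendsto (fun r : ℝ => f (r ^ 2)) atTop (𝓝 0) :=
    hs.is_zero_at_infty.comp ((tendsto_pow_atTop two_ne_zero).mono_right atTop_le_cocompact)
  have hftc := integral_Ioi_of_hasDerivAt_of_tendsto
    (hf.continuous.comp (continuous_pow 2)).continuousWithinAt (fun r _ => hderiv r) hint hlim
  calc ∫ r in Ioi (0 : ℝ), deriv f (r ^ 2) * r
      = (∫ r in Ioi (0 : ℝ), deriv f (r ^ 2) * (2 * r)) / 2 := by
        rw [← integral_div]; congr with r; ring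
    _ = -f 0 / 2 := by rw [hftc]; simp

section InnerProductSpace

variable {E : Type*} [NormedAddCommGroup E] [InnerProductSpace ℝ E] [FiniteDimensional ℝ E]
  [MeasurableSpace E] [BorelSpace E] [Nontrivial E]

theorem InnerProductSpace.volume_real_ball_zero_one_mul_Gamma :
    volume.real (ball (0 : E) 1) * Gamma (finrank ℝ E / 2 + 1) = π ^ ((finrank ℝ E : ℝ) / 2) := by
  rw [measureReal_def, InnerProductSpace.volume_ball, ENNReal.ofReal_one, one_pow, one_mul,
    ENNReal.toReal_ofReal (by positivity), div_mul_cancel₀ _ (Gamma_pos_of_pos (by positivity)).ne',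
    sqrt_eq_rpow, ← rpow_natCast, ← rpow_mul pi_nonneg]
  ring_nf

end InnerProductSpace

/-- Let `d ≥ 1` and let `f : ℝ → ℝ` be smooth, compactly supported and equal to `1` on a
neighborhood of `0`.  Then `(t, x) ↦ t^(d-1) * f'(‖x‖²) * ‖x‖² * exp (-t² ‖x‖²)` is
integrable on `(0, ∞) × ℝ^d` and
`-2 * ∫₀^∞ t^(d-1) (∫_{ℝ^d} f'(‖x‖²) ‖x‖² exp (-t² ‖x‖²) dx) dt = π^(d/2)`. -/
theorem thom_form_integral {d : ℕ} (hd : 1 ≤ d) (f : ℝ → ℝ)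
    (hf : ContDiff ℝ (⊤ : ℕ∞) f) (hsupp : HasCompactSupport f)
    (hone : ∀ᶠ x in nhds (0 : ℝ), f x = 1) :
    IntegrableOn
      (fun p : ℝ × EuclideanSpace ℝ (Fin d) =>
        p.1 ^ (d - 1) * (deriv f (‖p.2‖ ^ 2) * ‖p.2‖ ^ 2 * Real.exp (-(p.1 ^ 2) * ‖p.2‖ ^ 2)))
      (Set.Ioi (0 : ℝ) ×ˢ Set.univ) ∧
    -2 * ∫ t in Set.Ioi (0 : ℝ), t ^ (d - 1) *
        ∫ x : EuclideanSpace ℝ (Fin d),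
          deriv f (‖x‖ ^ 2) * ‖x‖ ^ 2 * Real.exp (-(t ^ 2) * ‖x‖ ^ 2) =
      Real.pi ^ ((d : ℝ) / 2) := by
  obtain ⟨n, rfl⟩ : ∃ n, d = n + 1 := ⟨d - 1, by omega⟩
  have hf1 : ContDiff ℝ 1 f := hf.of_le (by exact_mod_cast le_top)
  set h : ℝ → ℝ := fun u => deriv f u * u
  have hc : Continuous h := (hf1.continuous_deriv le_rfl).mul continuous_id
  have hs : HasCompactSupport h := hsupp.deriv.mul_right
  have h0 : h =ᶠ[𝓝 0] 0 := by
    filter_upwards [Filter.EventuallyEq.deriv hone] with u hu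
    simp [h, hu]
  simp only [Nat.add_sub_cancel]
  refine ⟨?_, ?_⟩
  · rw [IntegrableOn, Measure.volume_eq_prod, ← Measure.prod_restrict, Measure.restrict_univ]
    exact integrable_pow_mul_radial_mul_exp_neg_sq_mul_norm_sq volume hc hs h0 n
  have hradial : ∫ r in Ioi (0 : ℝ), r ^ n * (h (r ^ 2) / r ^ (n + 1)) =
      ∫ r in Ioi (0 : ℝ), deriv f (r ^ 2) * r := by
    refine setIntegral_congr_fun measurableSet_Ioi fun r (hr : 0 < r) => ?_
    simp only [h]
    field_simp
    ring
  have hball := InnerProductSpace.volume_real_ball_zero_one_mul_Gamma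
    (E := EuclideanSpace ℝ (Fin (n + 1)))
  rw [finrank_euclideanSpace_fin, Gamma_add_one (by positivity)] at hball
  rw [integral_Ioi_pow_mul_integral_radial_mul_exp_neg_sq_mul_norm_sq volume hc hs h0 n,
    integral_fun_norm_addHaar volume (fun r => h (r ^ 2) / r ^ (n + 1)),
    finrank_euclideanSpace_fin, Nat.add_sub_cancel, nsmul_eq_mul, smul_eq_mul]
  simp only [smul_eq_mul, hradial, integral_Ioi_deriv_comp_sq_mul_self hf1 hsupp,
    hone.self_of_nhds, ← hball]
  push_cast
  ring
end
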